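/- arXiv:2604.06948 — 8 statements merged into one kernel-verified Lean document; each statement's English description precedes it below -/
import Mathlib

section
/- Let n ≥ 1, μ > 0, and y ∈ ℝⁿ with 0 ≤ y₁ ≤ y₂ ≤ … ≤ yₙ and yₙ > 0. Then the function Φ(x) = (1/2)‖x − y‖₂² + μ‖x‖₂⁴/‖x‖₄⁴, defined on ℝⁿ \ {0}, attains a global minimum at some point x⋆ satisfying 0 ≤ x⋆₁ ≤ x⋆₂ ≤ … ≤ x⋆ₙ. -/
open Finset

private noncomputable def Phi {m : ℕ} (μ : ℝ) (y x : Fin (m + 1) → ℝ) : ℝ :=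
  (1 / 2) * ∑ i, (x i - y i) ^ 2 + μ * (∑ i, (x i) ^ 2) ^ 2 / (∑ i, (x i) ^ 4)

private lemma sum_pow4_pos' {m : ℕ} (x : Fin (m + 1) → ℝ) (hx : x ≠ 0) :
    0 < ∑ i, x i ^ 4 := by
  obtain ⟨i, hi⟩ := Function.ne_iff.1 hx
  have hi' : x i ≠ 0 := hi
  exact Finset.sum_pos' (fun j _ => by positivity) ⟨i, Finset.mem_univ i, by positivity⟩

private lemma exists_min' (n : ℕ) (μ : ℝ) (hμ : 0 < μ) (y : Fin (n + 1) → ℝ)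
    (hy0 : ∀ i, 0 ≤ y i) (hyn : 0 < y (Fin.last n)) :
    ∃ z : Fin (n + 1) → ℝ, z ≠ 0 ∧ ∀ x : Fin (n + 1) → ℝ, x ≠ 0 →
      Phi μ y z ≤ Phi μ y x := by
  classical
  -- basic bounds on the penalty term
  have hKlb : ∀ x : Fin (n + 1) → ℝ, x ≠ 0 →
      μ ≤ μ * (∑ i, (x i) ^ 2) ^ 2 / (∑ i, (x i) ^ 4) := by
    intro x hx
    have hd := sum_pow4_pos' x hx
    rw [le_div_iff₀ hd]
    have h1 : ∑ i, x i ^ 4 ≤ (∑ i, x i ^ 2) ^ 2 := by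
      have := Finset.sum_sq_le_sq_sum_of_nonneg
        (s := Finset.univ) (f := fun i => x i ^ 2) (fun i _ => sq_nonneg _)
      calc ∑ i, x i ^ 4 = ∑ i, (x i ^ 2) ^ 2 := by
            refine Finset.sum_congr rfl fun i _ => by ring
        _ ≤ (∑ i, x i ^ 2) ^ 2 := this
    nlinarith [h1]
  have hΦlb : ∀ x : Fin (n + 1) → ℝ, x ≠ 0 →
      (1 / 2) * ∑ i, (x i - y i) ^ 2 + μ ≤ Phi μ y x := by
    intro x hx
    have := hKlb x hx
    unfold Phi
    linarith
  -- abbreviations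
  obtain ⟨yn, hyn'⟩ : ∃ t : ℝ, t = y (Fin.last n) := ⟨_, rfl⟩
  have hyn0 : 0 < yn := hyn' ▸ hyn
  obtain ⟨a, ha⟩ : ∃ a : Fin (n + 1) → ℝ,
      a = fun i => if i = Fin.last n then yn else 0 := ⟨_, rfl⟩
  obtain ⟨Ty, hTy⟩ : ∃ t : ℝ, t = ∑ i, y i := ⟨_, rfl⟩
  obtain ⟨Ty2, hTy2⟩ : ∃ t : ℝ, t = ∑ i, y i ^ 2 := ⟨_, rfl⟩
  have hTy0 : 0 ≤ Ty := hTy ▸ Finset.sum_nonneg fun i _ => hy0 i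
  have hTy20 : yn ^ 2 ≤ Ty2 := by
    rw [hTy2, hyn']
    exact Finset.single_le_sum (f := fun i => y i ^ 2)
      (fun i _ => sq_nonneg _) (Finset.mem_univ _)
  have hyTy : ∀ i, y i ≤ Ty := fun i => by
    rw [hTy]
    exact Finset.single_le_sum (f := fun i => y i) (fun i _ => hy0 i) (Finset.mem_univ i)
  have hynTy : yn ≤ Ty := hyn' ▸ hyTy (Fin.last n)
  obtain ⟨M, hM⟩ : ∃ t : ℝ, t = (1 / 2) * (Ty2 - yn ^ 2) + μ := ⟨_, rfl⟩
  have hM0 : 0 < M := by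
    have h : 0 ≤ Ty2 - yn ^ 2 := by linarith
    rw [hM]; positivity
  have haΦ : Phi μ y a = M := by
    have h2 : ∑ i, a i ^ 2 = yn ^ 2 := by
      have h : ∀ i, a i ^ 2 = if i = Fin.last n then yn ^ 2 else 0 := by
        intro i; by_cases h : i = Fin.last n <;> simp [ha, h]
      simp [h]
    have h4 : ∑ i, a i ^ 4 = yn ^ 4 := by
      have h : ∀ i, a i ^ 4 = if i = Fin.last n then yn ^ 4 else 0 := by
        intro i; by_cases h : i = Fin.last n <;> simp [ha, h]
      simp [h]
    have h1 : ∑ i, (a i - y i) ^ 2 = Ty2 - yn ^ 2 := by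
      have h : ∀ i, (a i - y i) ^ 2 = y i ^ 2 - (if i = Fin.last n then yn ^ 2 else 0) := by
        intro i; by_cases h : i = Fin.last n <;> simp [ha, h, ← hyn']
      rw [Finset.sum_congr rfl fun i _ => h i, Finset.sum_sub_distrib]
      simp [← hTy2, hyn']
    have hyn4 : (yn : ℝ) ^ 4 ≠ 0 := by positivity
    unfold Phi
    rw [h1, h2, h4, hM, show (yn ^ 2) ^ 2 = yn ^ 4 by ring, mul_div_assoc,
      div_self hyn4, mul_one]
  -- the compact set
  obtain ⟨ε, hε⟩ : ∃ t : ℝ, t = yn ^ 2 / (4 * (Ty + 1)) := ⟨_, rfl⟩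
  have hε0 : 0 < ε := by rw [hε]; positivity
  have hεyn : ε ≤ yn := by
    rw [hε, div_le_iff₀ (by positivity)]
    nlinarith [mul_le_mul_of_nonneg_left hynTy hyn0.le, mul_nonneg hyn0.le hTy0]
  obtain ⟨R, hR⟩ : ∃ t : ℝ, t = Ty + Real.sqrt (2 * M) := ⟨_, rfl⟩
  have hsq : Real.sqrt (2 * M) ^ 2 = 2 * M := Real.sq_sqrt (by linarith)
  have hsqnn : 0 ≤ Real.sqrt (2 * M) := Real.sqrt_nonneg _
  have hR0 : 0 ≤ R := by rw [hR]; linarith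
  obtain ⟨S, hS⟩ : ∃ S : Set (Fin (n + 1) → ℝ),
      S = Metric.closedBall 0 R \ Metric.ball 0 ε := ⟨_, rfl⟩
  have hScpt : IsCompact S :=
    hS ▸ (isCompact_closedBall 0 R).diff Metric.isOpen_ball
  have haS : a ∈ S := by
    rw [hS]
    constructor
    · rw [Metric.mem_closedBall, dist_zero_right, pi_norm_le_iff_of_nonneg hR0]
      intro i
      rw [Real.norm_eq_abs]
      have hai : |a i| ≤ yn := by
        by_cases h : i = Fin.last n <;> simp [ha, h, abs_of_nonneg hyn0.le, hyn0.le]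
      rw [hR]
      linarith
    · intro hmem
      rw [Metric.mem_ball, dist_zero_right] at hmem
      have h1 : yn ≤ ‖a‖ := by
        calc yn = |a (Fin.last n)| := by simp [ha, abs_of_nonneg hyn0.le]
          _ = ‖a (Fin.last n)‖ := (Real.norm_eq_abs _).symm
          _ ≤ ‖a‖ := norm_le_pi_norm a _
      linarith
  have hSne : ∀ x ∈ S, x ≠ 0 := by
    intro x hx h0
    rw [hS] at hx
    apply hx.2
    rw [Metric.mem_ball, dist_zero_right, h0, norm_zero]
    exact hε0
  have hcont : ContinuousOn (Phi μ y) S := by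
    unfold Phi
    apply ContinuousOn.add
    · apply Continuous.continuousOn
      apply Continuous.mul continuous_const
      exact continuous_finset_sum _ fun i _ =>
        (((continuous_apply i).sub continuous_const).pow 2)
    · apply ContinuousOn.div
      · apply Continuous.continuousOn
        apply Continuous.mul continuous_const
        exact (continuous_finset_sum _ fun i _ => (continuous_apply i).pow 2).pow 2
      · apply Continuous.continuousOn
        exact continuous_finset_sum _ fun i _ => (continuous_apply i).pow 4
      · intro x hx
        exact (sum_pow4_pos' x (hSne x hx)).ne'
  obtain ⟨z, hzS, hzmin⟩ := hScpt.exists_isMinOn ⟨a, haS⟩ hcont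
  -- points outside S have value > Phi a
  have houtside : ∀ x : Fin (n + 1) → ℝ, x ≠ 0 → x ∉ S → Phi μ y a < Phi μ y x := by
    intro x hx0 hxS
    rw [haΦ]
    rw [hS, Set.mem_diff, not_and_or, not_not] at hxS
    rcases hxS with hbig | hsmall
    · -- some coordinate is large
      rw [Metric.mem_closedBall, dist_zero_right] at hbig
      push_neg at hbig
      have hco : ¬ ∀ i, ‖x i‖ ≤ R := by
        intro h
        exact absurd ((pi_norm_le_iff_of_nonneg hR0).2 h) (not_le.2 hbig)
      push_neg at hco
      obtain ⟨i, hi⟩ := hco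
      rw [Real.norm_eq_abs] at hi
      rw [hR] at hi
      have h1 : (|x i| - y i) ^ 2 ≤ (x i - y i) ^ 2 := by
        have h2 : |x i| - y i ≤ |x i - y i| := by
          calc |x i| - y i = |x i| - |y i| := by rw [abs_of_nonneg (hy0 i)]
            _ ≤ |x i - y i| := abs_sub_abs_le_abs_sub _ _
        have h3 : 0 ≤ |x i| - y i := by
          have := hyTy i; linarith
        calc (|x i| - y i) ^ 2 ≤ |x i - y i| ^ 2 := by nlinarith
          _ = (x i - y i) ^ 2 := sq_abs _
      have h4 : 2 * M < (|x i| - y i) ^ 2 := by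
        have h5 : Real.sqrt (2 * M) < |x i| - y i := by
          have := hyTy i; linarith
        nlinarith
      have h6 : (x i - y i) ^ 2 ≤ ∑ j, (x j - y j) ^ 2 :=
        Finset.single_le_sum (f := fun j => (x j - y j) ^ 2)
          (fun j _ => sq_nonneg _) (Finset.mem_univ i)
      have h7 := hΦlb x hx0
      linarith
    · -- all coordinates are small
      rw [Metric.mem_ball, dist_zero_right] at hsmall
      have hco : ∀ i, |x i| < ε := fun i => by
        calc |x i| = ‖x i‖ := (Real.norm_eq_abs _).symm
          _ ≤ ‖x‖ := norm_le_pi_norm x i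
          _ < ε := hsmall
      have h1 : ∀ i, y i ^ 2 - 2 * ε * y i ≤ (x i - y i) ^ 2 := by
        intro i
        have h2 := hco i
        have h3 := hy0 i
        have h4 : x i ≤ |x i| := le_abs_self _
        nlinarith [sq_nonneg (x i), mul_nonneg (sub_nonneg.2 h4) h3,
          mul_nonneg (le_of_lt (lt_of_le_of_lt (abs_nonneg (x i)) h2)) h3]
      have h5 : Ty2 - 2 * ε * Ty ≤ ∑ i, (x i - y i) ^ 2 := by
        calc Ty2 - 2 * ε * Ty = ∑ i, (y i ^ 2 - 2 * ε * y i) := by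
              rw [Finset.sum_sub_distrib, ← Finset.mul_sum, ← hTy2, ← hTy]
          _ ≤ ∑ i, (x i - y i) ^ 2 := Finset.sum_le_sum fun i _ => h1 i
      have hε4 : ε * (4 * (Ty + 1)) = yn ^ 2 := by
        rw [hε]; field_simp
      have hkey : 2 * ε * Ty < yn ^ 2 := by
        nlinarith [mul_nonneg hε0.le hTy0, hε0]
      have h7 := hΦlb x hx0
      rw [hM]
      linarith
  refine ⟨z, hSne z hzS, fun x hx => ?_⟩
  by_cases hxS : x ∈ S
  · exact hzmin hxS
  · calc Phi μ y z ≤ Phi μ y a := hzmin haS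
      _ ≤ Phi μ y x := (houtside x hx hxS).le

/-- Existence of an ordered global minimizer for the
inverse-kurtosis proximal objective
`Φ(x) = (1/2)‖x − y‖₂² + μ‖x‖₂⁴/‖x‖₄⁴` on `ℝⁿ \ {0}` (dimension `n+1 ≥ 1`). -/
theorem ordered_minimizer_inverse_kurtosis
    (n : ℕ) (μ : ℝ) (hμ : 0 < μ) (y : Fin (n + 1) → ℝ)
    (hy0 : ∀ i, 0 ≤ y i) (hymono : Monotone y) (hyn : 0 < y (Fin.last n)) :
    ∃ xs : Fin (n + 1) → ℝ, xs ≠ 0 ∧ (∀ i, 0 ≤ xs i) ∧ Monotone xs ∧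
      ∀ x : Fin (n + 1) → ℝ, x ≠ 0 →
        (1 / 2) * ∑ i, (xs i - y i) ^ 2
            + μ * (∑ i, (xs i) ^ 2) ^ 2 / (∑ i, (xs i) ^ 4)
          ≤ (1 / 2) * ∑ i, (x i - y i) ^ 2
            + μ * (∑ i, (x i) ^ 2) ^ 2 / (∑ i, (x i) ^ 4) := by
  classical
  obtain ⟨z, hz0, hzmin⟩ := exists_min' n μ hμ y hy0 hyn
  obtain ⟨w, hw⟩ : ∃ w : Fin (n + 1) → ℝ, w = fun i => |z i| := ⟨_, rfl⟩
  obtain ⟨σ, hσ⟩ : ∃ σ : Equiv.Perm (Fin (n + 1)), σ = Tuple.sort w := ⟨_, rfl⟩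
  have hmono : Monotone (w ∘ σ) := hσ ▸ Tuple.monotone_sort w
  have habs4 : ∀ b : ℝ, |b| ^ 4 = b ^ 4 := by
    intro b
    rw [show (4 : ℕ) = 2 * 2 from rfl, pow_mul, sq_abs, ← pow_mul]
  refine ⟨w ∘ σ, ?_, fun i => hw ▸ abs_nonneg _, hmono, ?_⟩
  · intro h
    apply hz0
    funext i
    have h2 := congrFun h (σ⁻¹ i)
    simp only [Function.comp_apply, Equiv.Perm.inv_def, Equiv.apply_symm_apply, Pi.zero_apply] at h2
    rw [hw] at h2
    simpa [abs_eq_zero] using h2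
  · intro x hx
    have hmain : Phi μ y (w ∘ σ) ≤ Phi μ y z := by
      have hq2 : ∑ i, ((w ∘ σ) i) ^ 2 = ∑ i, (z i) ^ 2 := by
        have h := Equiv.sum_comp σ (fun i => w i ^ 2)
        simp only [Function.comp_apply]
        rw [h]
        exact Finset.sum_congr rfl fun i _ => by rw [hw]; exact sq_abs _
      have hq4 : ∑ i, ((w ∘ σ) i) ^ 4 = ∑ i, (z i) ^ 4 := by
        have h := Equiv.sum_comp σ (fun i => w i ^ 4)
        simp only [Function.comp_apply]
        rw [h]
        exact Finset.sum_congr rfl fun i _ => by rw [hw]; exact habs4 _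
      have hxy : ∑ i, z i * y i ≤ ∑ i, (w ∘ σ) i * y i := by
        have step1 : ∑ i, z i * y i ≤ ∑ i, w i * y i :=
          Finset.sum_le_sum fun i _ => by
            rw [hw]
            exact mul_le_mul_of_nonneg_right (le_abs_self _) (hy0 i)
        have hmv : Monovary (w ∘ σ) y := hmono.monovary hymono
        have step2 := hmv.sum_comp_perm_mul_le_sum_mul (σ := σ⁻¹)
        have heq : ∀ i, (w ∘ σ) (σ⁻¹ i) = w i := fun i => by
          simp [Function.comp_apply, Equiv.Perm.inv_def, Equiv.apply_symm_apply]
        rw [Finset.sum_congr rfl fun i _ => by rw [heq i]] at step2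
        linarith
      have expand : ∀ u : Fin (n + 1) → ℝ,
          ∑ i, (u i - y i) ^ 2 = ∑ i, u i ^ 2 - 2 * ∑ i, u i * y i + ∑ i, y i ^ 2 := by
        intro u
        rw [Finset.mul_sum, ← Finset.sum_sub_distrib, ← Finset.sum_add_distrib]
        exact Finset.sum_congr rfl fun i _ => by ring
      have hA : ∑ i, ((w ∘ σ) i - y i) ^ 2 ≤ ∑ i, (z i - y i) ^ 2 := by
        rw [expand (w ∘ σ), expand z, hq2]
        linarith
      unfold Phi
      rw [hq2, hq4]
      linarith
    have := le_trans hmain (hzmin x hx)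
    simpa [Phi] using this
end

section
/- Let n ≥ 1, let y ∈ ℝⁿ be nondecreasing (y₁ ≤ y₂ ≤ … ≤ yₙ), let h : ℝⁿ → ℝ be invariant under permutations of the coordinates, and let x ∈ ℝⁿ. If x↑ denotes the nondecreasing rearrangement of x, then (1/2)‖x↑ − y‖₂² + h(x↑) ≤ (1/2)‖x − y‖₂² + h(x). -/
/-- Replacing `x` by its nondecreasing rearrangement `x↑`
(obtained through the sorting permutation `Tuple.sort x`) does not increase
the value of `(1/2)‖x − y‖₂² + h(x)` whenever `y` is nondecreasing and
`h` is invariant under permutations of the coordinates. -/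
theorem rearrangement_decreases_proximal_objective
    (n : ℕ) (y : Fin (n + 1) → ℝ) (hy : Monotone y)
    (h : (Fin (n + 1) → ℝ) → ℝ)
    (hperm : ∀ (z : Fin (n + 1) → ℝ) (σ : Equiv.Perm (Fin (n + 1))), h (z ∘ σ) = h z)
    (x : Fin (n + 1) → ℝ) :
    (1 / 2) * ∑ i, ((x ∘ Tuple.sort x) i - y i) ^ 2 + h (x ∘ Tuple.sort x)
      ≤ (1 / 2) * ∑ i, (x i - y i) ^ 2 + h x := by
  rw [hperm x (Tuple.sort x)]
  have hmono : Monotone (x ∘ Tuple.sort x) := Tuple.monotone_sort x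
  have hmv : Monovary y (x ∘ Tuple.sort x) := hy.monovary hmono
  have key : ∑ i, y i * ((x ∘ Tuple.sort x) ∘ ⇑(Tuple.sort x)⁻¹) i
      ≤ ∑ i, y i * (x ∘ Tuple.sort x) i :=
    hmv.sum_mul_comp_perm_le_sum_mul
  have hx : ((x ∘ Tuple.sort x) ∘ ⇑(Tuple.sort x)⁻¹) = x := by
    ext i; simp
  rw [hx] at key
  have hsq : ∑ i, ((x ∘ Tuple.sort x) i) ^ 2 = ∑ i, (x i) ^ 2 :=
    Equiv.sum_comp (Tuple.sort x) (fun i => (x i) ^ 2)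
  have expand : ∀ (z : Fin (n + 1) → ℝ), ∑ i, (z i - y i) ^ 2
      = ∑ i, (z i) ^ 2 - 2 * ∑ i, y i * z i + ∑ i, (y i) ^ 2 := by
    intro z
    rw [Finset.mul_sum, ← Finset.sum_sub_distrib, ← Finset.sum_add_distrib]
    congr 1; ext i; ring
  have : ∑ i, ((x ∘ Tuple.sort x) i - y i) ^ 2 ≤ ∑ i, (x i - y i) ^ 2 := by
    rw [expand, expand, hsq]; linarith
  linarith
end

section
/- Let n ≥ 2 and for each i = 1, …, n suppose the cubic equation 4μα²t³ − (1 + 4μα)t + yᵢ = 0 (with fixed μ, α > 0 and 0 < y₁ ≤ … ≤ yₙ) admits exactly two positive roots 0 < rᵢ < Rᵢ, and that these roots satisfy r₁ < r₂ < … < rₙ, R₁ > R₂ > … > Rₙ, and Rₙ > r_{n−1}. If x ∈ ℝⁿ is nondecreasing (x₁ ≤ x₂ ≤ … ≤ xₙ) and each component satisfies xᵢ ∈ {rᵢ, Rᵢ}, then xᵢ = rᵢ for all i = 1, …, n−1. -/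
/-- Small-root selection for the first `n−1` components
(dimension `n+2 ≥ 2`): if each coordinate-wise cubic
`4μα²t³ − (1+4μα)t + yᵢ = 0` has exactly two positive roots `0 < rᵢ < Rᵢ`,
with `r` strictly increasing, `R` strictly decreasing, and `Rₙ > r_{n−1}`,
then any nondecreasing vector `x` with `xᵢ ∈ {rᵢ, Rᵢ}` takes the small root
in every coordinate except possibly the last. -/
theorem small_root_selection
    (n : ℕ) (μ α : ℝ) (hμ : 0 < μ) (hα : 0 < α)
    (y r R : Fin (n + 2) → ℝ)
    (hy0 : 0 < y 0) (hymono : Monotone y)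
    (hrR : ∀ i, 0 < r i ∧ r i < R i)
    (hrroot : ∀ i, 4 * μ * α ^ 2 * (r i) ^ 3 - (1 + 4 * μ * α) * r i + y i = 0)
    (hRroot : ∀ i, 4 * μ * α ^ 2 * (R i) ^ 3 - (1 + 4 * μ * α) * R i + y i = 0)
    (honly : ∀ i, ∀ t : ℝ, 0 < t →
      4 * μ * α ^ 2 * t ^ 3 - (1 + 4 * μ * α) * t + y i = 0 → t = r i ∨ t = R i)
    (hrmono : StrictMono r) (hRanti : StrictAnti R)
    (hsep : r ⟨n, by omega⟩ < R (Fin.last (n + 1)))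
    (x : Fin (n + 2) → ℝ) (hxmono : Monotone x)
    (hx : ∀ i, x i = r i ∨ x i = R i) :
    ∀ i : Fin (n + 2), (i : ℕ) < n + 1 → x i = r i := by
  intro i hi
  by_contra hne
  have hxi : x i = R i := (hx i).resolve_left hne
  set m : Fin (n+2) := ⟨n, by omega⟩ with hm
  have him : i ≤ m := Fin.le_def.mpr (by simp [hm]; omega)
  have h1 : R i ≤ x m := by rw [← hxi]; exact hxmono him
  have h2 : R m ≤ R i := hRanti.antitone him
  have hxm : x m = R m := by
    rcases hx m with h | h
    · exfalso; have := (hrR m).2; rw [h] at h1; linarith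
    · exact h
  have hieq : i = m := by
    by_contra hne2
    have : R m < R i := hRanti (lt_of_le_of_ne him hne2)
    rw [hxm] at h1; linarith
  set L := Fin.last (n+1) with hL
  have hmL : m < L := by rw [Fin.lt_def]; simp [hm, hL]
  have h3 : x m ≤ x L := hxmono hmL.le
  have h4 : R L < R m := hRanti hmL
  have hxL : x L = r L := by
    rcases hx L with h | h
    · exact h
    · exfalso; rw [hxm, h] at h3; linarith
  rw [hxm, hxL] at h3
  have h5 := (hrR L).2
  linarith
end

section
/- Let n ≥ 1, μ > 0, y ∈ ℝⁿ, and let x ∈ ℝⁿ \ {0} be a local minimizer of Φ(x) = (1/2)‖x − y‖₂² + μ‖x‖₂⁴/‖x‖₄⁴. Set α = ‖x‖₂²/‖x‖₄⁴ = (Σⱼ xⱼ²)/(Σⱼ xⱼ⁴). Then every component satisfies the cubic equation 4μα²xᵢ³ − (1 + 4μα)xᵢ + yᵢ = 0. -/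
/-- First-order optimality conditions for the inverse-kurtosis
proximal objective: if `x ≠ 0` is a local minimizer of
`Φ(x) = (1/2)‖x − y‖₂² + μ‖x‖₂⁴/‖x‖₄⁴` and `α = ‖x‖₂²/‖x‖₄⁴`, then every
component satisfies the cubic `4μα²xᵢ³ − (1+4μα)xᵢ + yᵢ = 0`. -/
theorem inverse_kurtosis_stationarity
    (n : ℕ) (μ : ℝ) (hμ : 0 < μ) (y x : Fin (n + 1) → ℝ) (hx : x ≠ 0)
    (hmin : IsLocalMin (fun z : Fin (n + 1) → ℝ =>
      (1 / 2) * ∑ i, (z i - y i) ^ 2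
        + μ * (∑ i, (z i) ^ 2) ^ 2 / (∑ i, (z i) ^ 4)) x)
    (α : ℝ) (hα : α = (∑ j, (x j) ^ 2) / (∑ j, (x j) ^ 4)) :
    ∀ i, 4 * μ * α ^ 2 * (x i) ^ 3 - (1 + 4 * μ * α) * x i + y i = 0 := by
  intro i
  classical
  set A : ℝ := ∑ j ∈ Finset.univ.erase i, (x j) ^ 2 with hA
  set B : ℝ := ∑ j ∈ Finset.univ.erase i, (x j) ^ 4 with hB
  set C : ℝ := ∑ j ∈ Finset.univ.erase i, (x j - y j) ^ 2 with hC
  -- splitting lemmas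
  have hsum2 : ∀ t : ℝ, ∑ j, (Function.update x i t j) ^ 2 = t ^ 2 + A := by
    intro t
    rw [hA, ← Finset.add_sum_erase _ _ (Finset.mem_univ i)]
    congr 1
    · simp
    · exact Finset.sum_congr rfl fun j hj => by
        rw [Function.update_of_ne (Finset.mem_erase.1 hj).1]
  have hsum4 : ∀ t : ℝ, ∑ j, (Function.update x i t j) ^ 4 = t ^ 4 + B := by
    intro t
    rw [hB, ← Finset.add_sum_erase _ _ (Finset.mem_univ i)]
    congr 1
    · simp
    · exact Finset.sum_congr rfl fun j hj => by
        rw [Function.update_of_ne (Finset.mem_erase.1 hj).1]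
  have hsum1 : ∀ t : ℝ, ∑ j, (Function.update x i t j - y j) ^ 2 = (t - y i) ^ 2 + C := by
    intro t
    rw [hC, ← Finset.add_sum_erase _ _ (Finset.mem_univ i)]
    congr 1
    · simp
    · exact Finset.sum_congr rfl fun j hj => by
        rw [Function.update_of_ne (Finset.mem_erase.1 hj).1]
  have hS2 : ∑ j, (x j) ^ 2 = (x i) ^ 2 + A := by
    have := hsum2 (x i); rwa [Function.update_eq_self] at this
  have hS4 : ∑ j, (x j) ^ 4 = (x i) ^ 4 + B := by
    have := hsum4 (x i); rwa [Function.update_eq_self] at this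
  have hS4pos : 0 < (x i) ^ 4 + B := by
    rw [← hS4]
    obtain ⟨j, hj⟩ : ∃ j, x j ≠ 0 := by
      by_contra h; push_neg at h; exact hx (funext h)
    exact Finset.sum_pos' (fun k _ => by positivity) ⟨j, Finset.mem_univ j, by positivity⟩
  have hne : (x i) ^ 4 + B ≠ 0 := ne_of_gt hS4pos
  -- one-variable restriction
  set g : ℝ → ℝ := fun t =>
    (1 / 2) * ((t - y i) ^ 2 + C) + μ * (t ^ 2 + A) ^ 2 / (t ^ 4 + B) with hg
  have hcont : Continuous (fun t : ℝ => Function.update x i t) := by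
    apply continuous_pi
    intro j
    by_cases h : j = i
    · subst h; simpa using continuous_id'
    · simpa [Function.update_of_ne h] using continuous_const
  have hglocal : IsLocalMin g (x i) := by
    have htend : Filter.Tendsto (fun t : ℝ => Function.update x i t)
        (nhds (x i)) (nhds x) := by
      have := hcont.tendsto (x i)
      rwa [Function.update_eq_self] at this
    have hmin' : IsLocalMin ((fun z : Fin (n + 1) → ℝ =>
        (1 / 2) * ∑ i, (z i - y i) ^ 2
          + μ * (∑ i, (z i) ^ 2) ^ 2 / (∑ i, (z i) ^ 4)) ∘
        (fun t : ℝ => Function.update x i t)) (x i) := by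
      refine IsMinFilter.comp_tendsto ?_ htend
      rwa [Function.update_eq_self]
    have heq : ((fun z : Fin (n + 1) → ℝ =>
        (1 / 2) * ∑ i, (z i - y i) ^ 2
          + μ * (∑ i, (z i) ^ 2) ^ 2 / (∑ i, (z i) ^ 4)) ∘
        (fun t : ℝ => Function.update x i t)) = g := by
      funext t
      simp only [Function.comp_apply, hg, hsum1 t, hsum2 t, hsum4 t]
    rwa [heq] at hmin'
  -- derivative of g at x i
  have hd1 : HasDerivAt (fun t : ℝ => (1 / 2) * ((t - y i) ^ 2 + C))
      (x i - y i) (x i) := by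
    have h : HasDerivAt (fun t : ℝ => (t - y i) ^ 2 + C)
        (2 * (x i - y i)) (x i) := by
      have h0 := (((hasDerivAt_id (x i)).sub_const (y i)).pow 2).add_const C
      refine h0.congr_deriv ?_
      push_cast
      simp only [id_eq]
      ring
    have := h.const_mul (1 / 2)
    refine this.congr_deriv ?_
    ring
  have hd2 : HasDerivAt (fun t : ℝ => (t ^ 2 + A) ^ 2)
      (2 * ((x i) ^ 2 + A) * (2 * x i)) (x i) := by
    have h0 := ((hasDerivAt_pow 2 (x i)).add_const A).pow 2
    refine h0.congr_deriv ?_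
    push_cast
    ring
  have hd3 : HasDerivAt (fun t : ℝ => t ^ 4 + B) (4 * (x i) ^ 3) (x i) := by
    have h0 := (hasDerivAt_pow 4 (x i)).add_const B
    refine h0.congr_deriv ?_
    all_goals push_cast; ring
  have hdiv := (hd2.div hd3 hne).const_mul μ
  have hgd : HasDerivAt g
      ((x i - y i) + μ * ((2 * ((x i) ^ 2 + A) * (2 * x i) * ((x i) ^ 4 + B)
        - ((x i) ^ 2 + A) ^ 2 * (4 * (x i) ^ 3)) / ((x i) ^ 4 + B) ^ 2)) (x i) := by
    have h := hd1.add hdiv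
    rw [show g = ((fun t : ℝ => 1 / 2 * ((t - y i) ^ 2 + C)) + fun y => μ * (((fun t : ℝ => (t ^ 2 + A) ^ 2) / fun t => t ^ 4 + B) : ℝ → ℝ) y) from by
      funext t; simp only [hg, Pi.add_apply, Pi.div_apply]; ring]
    refine h.congr_deriv ?_
    ring
  have hzero := hglocal.hasDerivAt_eq_zero hgd
  -- algebra
  rw [hα, hS2, hS4]
  have h2 : ((x i) ^ 4 + B) ^ 2 ≠ 0 := pow_ne_zero _ hne
  field_simp at hzero ⊢
  nlinarith [hzero, sq_nonneg ((x i) ^ 4 + B)]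
end

section
/- Let n ≥ 1 and 0 < y₁ ≤ … ≤ yₙ with yₙ > 0. Define vᵢ = cos((arccos(−yᵢ/yₙ) + 4π)/3), S₂ = Σᵢ vᵢ² and S₄ = Σᵢ vᵢ⁴, and assume S₂ > 0, S₄ > 0. Suppose μ, α, p > 0 satisfy the three relations: (i) 4μα²p = 1 + 4μα; (ii) 4pαS₄ = 3S₂ (i.e., α equals the norm ratio Σxᵢ²/Σxᵢ⁴ of the vector xᵢ = 2√(p/3)·vᵢ); and (iii) (1 + 4μα)³ = 27μα²yₙ². Then μ = yₙ²·S₄²·(3S₂ − 4S₄)/S₂³. -/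
/-- Closed-form critical parameter for the inverse-kurtosis
proximity operator: with `vᵢ = cos((arccos(−yᵢ/yₙ) + 4π)/3)`, `S₂ = Σvᵢ²`,
`S₄ = Σvᵢ⁴`, if `μ, α, p > 0` satisfy `4μα²p = 1 + 4μα`, `4pαS₄ = 3S₂` and
`(1 + 4μα)³ = 27μα²yₙ²`, then `μ = yₙ²·S₄²·(3S₂ − 4S₄)/S₂³`. -/
theorem critical_mu_inverse_kurtosis
    (n : ℕ) (y : Fin (n + 1) → ℝ) (hy0 : ∀ i, 0 < y i) (hymono : Monotone y)
    (v : Fin (n + 1) → ℝ)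
    (hv : ∀ i, v i =
      Real.cos ((Real.arccos (-(y i) / y (Fin.last n)) + 4 * Real.pi) / 3))
    (S₂ S₄ : ℝ) (hS2 : S₂ = ∑ i, (v i) ^ 2) (hS4 : S₄ = ∑ i, (v i) ^ 4)
    (hS2pos : 0 < S₂) (hS4pos : 0 < S₄)
    (μ α p : ℝ) (hμ : 0 < μ) (hα : 0 < α) (hp : 0 < p)
    (h1 : 4 * μ * α ^ 2 * p = 1 + 4 * μ * α)
    (h2 : 4 * p * α * S₄ = 3 * S₂)
    (h3 : (1 + 4 * μ * α) ^ 3 = 27 * μ * α ^ 2 * (y (Fin.last n)) ^ 2) :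
    μ = (y (Fin.last n)) ^ 2 * S₄ ^ 2 * (3 * S₂ - 4 * S₄) / S₂ ^ 3 := by
  set Y := y (Fin.last n) with hY
  -- E1 : (1+4μα) S₄ = 3 μ α S₂
  have E1 : (1 + 4 * μ * α) * S₄ = 3 * μ * α * S₂ := by
    linear_combination (-S₄) * h1 + μ * α * h2
  -- cube of E1
  have hc : (1 + 4 * μ * α) ^ 3 * S₄ ^ 3 = 27 * μ ^ 3 * α ^ 3 * S₂ ^ 3 := by
    have := congrArg (· ^ 3) E1
    linear_combination this
  -- combine with h3
  have hcc : 27 * μ * α ^ 2 * Y ^ 2 * S₄ ^ 3 = 27 * μ ^ 3 * α ^ 3 * S₂ ^ 3 := by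
    rw [← h3]; exact hc
  have hμα : (27 : ℝ) * μ * α ^ 2 ≠ 0 := by positivity
  have E2 : μ ^ 2 * α * S₂ ^ 3 = Y ^ 2 * S₄ ^ 3 := by
    have h27 : (27 : ℝ) * μ * α ^ 2 * (Y ^ 2 * S₄ ^ 3) =
        27 * μ * α ^ 2 * (μ ^ 2 * α * S₂ ^ 3) := by linear_combination hcc
    have := mul_left_cancel₀ hμα h27
    linarith
  -- E3 : S₄ = μ α (3 S₂ - 4 S₄)
  have E3 : S₄ = μ * α * (3 * S₂ - 4 * S₄) := by linear_combination E1
  have key : μ * S₂ ^ 3 * S₄ = Y ^ 2 * S₄ ^ 2 * (3 * S₂ - 4 * S₄) * S₄ := by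
    linear_combination (3 * S₂ - 4 * S₄) * E2 + μ * S₂ ^ 3 * E3
  have key2 : μ * S₂ ^ 3 = Y ^ 2 * S₄ ^ 2 * (3 * S₂ - 4 * S₄) :=
    mul_right_cancel₀ hS4pos.ne' key
  field_simp
  linarith [key2]
end

section
/- Let n ≥ 1, μ > 0, and y ∈ ℝⁿ with 0 ≤ y₁ ≤ y₂ ≤ … ≤ yₙ and yₙ > 0. Then the function Φ(x) = (1/2)‖x − y‖₂² + μ(Σᵢ xᵢ²)^{3/2}/(Σᵢ xᵢ³), defined on the set {x ∈ ℝⁿ : xᵢ ≥ 0 for all i, x ≠ 0}, attains a global minimum at some point x⋆ satisfying 0 ≤ x⋆₁ ≤ x⋆₂ ≤ … ≤ x⋆ₙ. -/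
open Finset

private lemma sum_pow_pos' {m : ℕ} (k : ℕ) (x : Fin m → ℝ) (hx : ∀ i, 0 ≤ x i)
    (hxne : x ≠ 0) : 0 < ∑ i, x i ^ k := by
  obtain ⟨j, hj⟩ := Function.ne_iff.mp hxne
  have hjpos : 0 < x j := lt_of_le_of_ne (hx j) (Ne.symm hj)
  exact Finset.sum_pos' (fun i _ => pow_nonneg (hx i) k)
    ⟨j, Finset.mem_univ j, pow_pos hjpos k⟩

private lemma cube_sum_le_rpow {m : ℕ} (x : Fin m → ℝ) (hx : ∀ i, 0 ≤ x i) :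
    ∑ i, x i ^ 3 ≤ (∑ i, x i ^ 2) ^ ((3 : ℝ) / 2) := by
  set s := ∑ i, x i ^ 2 with hs
  have hs0 : 0 ≤ s := Finset.sum_nonneg fun i _ => sq_nonneg _
  have hxle : ∀ i, x i ≤ Real.sqrt s := by
    intro i
    have h1 : x i ^ 2 ≤ s :=
      Finset.single_le_sum (f := fun j => x j ^ 2) (fun j _ => sq_nonneg _) (Finset.mem_univ i)
    calc x i = Real.sqrt (x i ^ 2) := (Real.sqrt_sq (hx i)).symm
      _ ≤ Real.sqrt s := Real.sqrt_le_sqrt h1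
  have h2 : ∑ i, x i ^ 3 ≤ ∑ i, x i ^ 2 * Real.sqrt s := by
    refine Finset.sum_le_sum fun i _ => ?_
    have h3 : x i ^ 3 = x i ^ 2 * x i := by ring
    rw [h3]
    exact mul_le_mul_of_nonneg_left (hxle i) (sq_nonneg _)
  rw [← Finset.sum_mul] at h2
  have h4 : s ^ ((3 : ℝ) / 2) = s * Real.sqrt s := by
    rw [show (3 : ℝ) / 2 = 1 + 1 / 2 by norm_num, Real.rpow_add' hs0 (by norm_num),
      Real.rpow_one, Real.sqrt_eq_rpow]
  rw [h4]
  exact h2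

private lemma sum_sq_expand {m : ℕ} (y u : Fin m → ℝ) :
    ∑ i, (u i - y i) ^ 2 = ∑ i, u i ^ 2 - 2 * ∑ i, u i * y i + ∑ i, y i ^ 2 := by
  have h : ∀ i ∈ Finset.univ, (u i - y i) ^ 2 = (u i ^ 2 + y i ^ 2) - 2 * (u i * y i) := by
    intro i _; ring
  rw [Finset.sum_congr rfl h, Finset.sum_sub_distrib, Finset.sum_add_distrib, ← Finset.mul_sum]
  ring

set_option maxHeartbeats 1000000 in
/-- Existence of an ordered global minimizer for the
inverse-skewness proximal objective
`Φ(x) = (1/2)‖x − y‖₂² + μ(Σxᵢ²)^{3/2}/(Σxᵢ³)` on the nonzero part of the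
nonnegative orthant of `ℝⁿ` (dimension `n+1 ≥ 1`). -/
theorem ordered_minimizer_inverse_skewness
    (n : ℕ) (μ : ℝ) (hμ : 0 < μ) (y : Fin (n + 1) → ℝ)
    (hy0 : ∀ i, 0 ≤ y i) (hymono : Monotone y) (hyn : 0 < y (Fin.last n)) :
    ∃ xs : Fin (n + 1) → ℝ, (∀ i, 0 ≤ xs i) ∧ xs ≠ 0 ∧ Monotone xs ∧
      ∀ x : Fin (n + 1) → ℝ, (∀ i, 0 ≤ x i) → x ≠ 0 →
        (1 / 2) * ∑ i, (xs i - y i) ^ 2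
            + μ * (∑ i, (xs i) ^ 2) ^ ((3 : ℝ) / 2) / (∑ i, (xs i) ^ 3)
          ≤ (1 / 2) * ∑ i, (x i - y i) ^ 2
            + μ * (∑ i, (x i) ^ 2) ^ ((3 : ℝ) / 2) / (∑ i, (x i) ^ 3) := by
  classical
  set Φ : (Fin (n + 1) → ℝ) → ℝ := fun x =>
    (1 / 2) * ∑ i, (x i - y i) ^ 2
      + μ * (∑ i, (x i) ^ 2) ^ ((3 : ℝ) / 2) / (∑ i, (x i) ^ 3) with hΦdef
  set Y : ℝ := y (Fin.last n) with hYdef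
  set S : ℝ := ∑ i, y i ^ 2 with hSdef
  have hS0 : 0 ≤ S := Finset.sum_nonneg fun i _ => sq_nonneg _
  set R : ℝ := Y + Real.sqrt (S + 2 * μ) with hRdef
  set ε : ℝ := Y / 2 with hεdef
  have hεpos : 0 < ε := by positivity
  have hyY : ∀ i, y i ≤ Y := fun i => hymono (Fin.le_last i)
  -- the candidate point e
  set e : Fin (n + 1) → ℝ := fun i => if i = Fin.last n then Y else 0 with hedef
  have he2 : ∑ i, e i ^ 2 = Y ^ 2 := by
    simp [hedef, apply_ite (fun t : ℝ => t ^ 2)]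
  have he3 : ∑ i, e i ^ 3 = Y ^ 3 := by
    simp [hedef, apply_ite (fun t : ℝ => t ^ 3)]
  have he1 : ∑ i, e i = Y := by simp [hedef]
  have hesq : ∑ i, (e i - y i) ^ 2 = S - Y ^ 2 := by
    have h : ∀ i ∈ Finset.univ, (e i - y i) ^ 2
        = y i ^ 2 - (if i = Fin.last n then Y ^ 2 else 0) := by
      intro i _
      by_cases h : i = Fin.last n
      · subst h; rw [← hYdef]; simp [hedef]
      · simp [hedef, h]
    rw [Finset.sum_congr rfl h, Finset.sum_sub_distrib]
    simp [hSdef]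
  have hΦe : Φ e = (1 / 2) * (S - Y ^ 2) + μ := by
    have hY3 : ((Y ^ 2 : ℝ)) ^ ((3 : ℝ) / 2) = Y ^ 3 := by
      rw [show (Y : ℝ) ^ 2 = Y ^ ((2 : ℕ) : ℝ) from (Real.rpow_natCast Y 2).symm,
        show (Y : ℝ) ^ 3 = Y ^ ((3 : ℕ) : ℝ) from (Real.rpow_natCast Y 3).symm,
        ← Real.rpow_mul hyn.le]
      norm_num
    rw [hΦdef]
    simp only [he2, he3, hesq, hY3]
    rw [mul_div_assoc, div_self (pow_ne_zero 3 hyn.ne')]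
    ring
  -- the compact set K
  set K : Set (Fin (n + 1) → ℝ) :=
    Set.Icc (0 : Fin (n + 1) → ℝ) (fun _ => R) ∩ {x | ε ≤ ∑ i, x i} with hKdef
  have hsqrtnn : (0 : ℝ) ≤ Real.sqrt (S + 2 * μ) := Real.sqrt_nonneg _
  have hYR : Y ≤ R := by rw [hRdef]; linarith
  have hR0 : 0 ≤ R := by rw [hRdef]; positivity
  have heK : e ∈ K := by
    refine ⟨Set.mem_Icc.mpr ⟨fun i => ?_, fun i => ?_⟩, ?_⟩
    · by_cases h : i = Fin.last n <;> simp [hedef, h, hyn.le]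
    · by_cases h : i = Fin.last n
      · simpa [hedef, h] using hYR
      · simpa [hedef, h] using hR0
    · rw [Set.mem_setOf_eq, he1, hεdef]; linarith
  have hKcompact : IsCompact K := by
    apply IsCompact.inter_right isCompact_Icc
    exact isClosed_le continuous_const (continuous_finset_sum _ fun i _ => continuous_apply i)
  -- properties of members of K
  have hKnonneg : ∀ x ∈ K, ∀ i, 0 ≤ x i := fun x hx i => hx.1.1 i
  have hKne : ∀ x ∈ K, x ≠ 0 := by
    intro x hx h0
    have := hx.2
    rw [Set.mem_setOf_eq, h0] at this
    simp at this
    linarith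
  have hden : ∀ x : Fin (n + 1) → ℝ, (∀ i, 0 ≤ x i) → x ≠ 0 → 0 < ∑ i, x i ^ 3 :=
    fun x hx hne => sum_pow_pos' 3 x hx hne
  -- continuity
  have hcont : ContinuousOn Φ K := by
    apply ContinuousOn.add
    · exact (continuous_const.mul (continuous_finset_sum _ fun i _ =>
        ((continuous_apply i).sub continuous_const).pow 2)).continuousOn
    · apply ContinuousOn.div
      · exact (continuous_const.mul ((continuous_finset_sum _ fun i _ =>
          (continuous_apply i).pow 2).rpow_const fun x => Or.inr (by norm_num))).continuousOn
      · exact (continuous_finset_sum _ fun i _ => (continuous_apply i).pow 3).continuousOn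
      · intro x hx
        exact (hden x (hKnonneg x hx) (hKne x hx)).ne'
  obtain ⟨z, hzK, hzmin⟩ := hKcompact.exists_isMinOn ⟨e, heK⟩ hcont
  have hz0 : ∀ i, 0 ≤ z i := hKnonneg z hzK
  have hzne : z ≠ 0 := hKne z hzK
  have hΦeK : Φ z ≤ Φ e := hzmin heK
  -- global minimality of z
  have hglobal : ∀ x : Fin (n + 1) → ℝ, (∀ i, 0 ≤ x i) → x ≠ 0 → Φ z ≤ Φ x := by
    intro x hx0 hxne
    have hΦx : Φ x = (1 / 2) * ∑ i, (x i - y i) ^ 2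
        + μ * (∑ i, (x i) ^ 2) ^ ((3 : ℝ) / 2) / (∑ i, (x i) ^ 3) := by rw [hΦdef]
    by_cases hxK : x ∈ K
    · exact hzmin hxK
    have hB : 0 < ∑ i, x i ^ 3 := hden x hx0 hxne
    have hA : ∑ i, x i ^ 3 ≤ (∑ i, x i ^ 2) ^ ((3 : ℝ) / 2) := cube_sum_le_rpow x hx0
    have hAnn : (0 : ℝ) ≤ (∑ i, x i ^ 2) ^ ((3 : ℝ) / 2) :=
      Real.rpow_nonneg (Finset.sum_nonneg fun i _ => sq_nonneg _) _
    have hΦeub : Φ e ≤ (1 / 2) * S + μ := by rw [hΦe]; nlinarith [sq_nonneg Y]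
    by_cases hR : ∀ i, x i ≤ R
    · -- then the sum is small
      have hxsmall : ∑ i, x i < ε := by
        by_contra h
        push_neg at h
        exact hxK ⟨⟨fun i => hx0 i, fun i => hR i⟩, h⟩
      have hterm2 : μ ≤ μ * (∑ i, x i ^ 2) ^ ((3 : ℝ) / 2) / (∑ i, x i ^ 3) := by
        rw [le_div_iff₀ hB]
        exact mul_le_mul_of_nonneg_left hA hμ.le
      have hcross : ∑ i, x i * y i ≤ Y * ∑ i, x i := by
        rw [Finset.mul_sum]
        refine Finset.sum_le_sum fun i _ => ?_
        calc x i * y i ≤ x i * Y := mul_le_mul_of_nonneg_left (hyY i) (hx0 i)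
          _ = Y * x i := mul_comm _ _
      have hsum1 : S - Y ^ 2 ≤ ∑ i, (x i - y i) ^ 2 := by
        rw [sum_sq_expand y x]
        have h1 : 0 ≤ ∑ i, x i ^ 2 := Finset.sum_nonneg fun i _ => sq_nonneg _
        have h2 : Y * ∑ i, x i ≤ Y * ε := mul_le_mul_of_nonneg_left hxsmall.le hyn.le
        rw [hεdef] at h2
        have h2' : Y * (Y / 2) = Y ^ 2 / 2 := by ring
        linarith only [h1, h2, h2', hcross]
      have hex : Φ e ≤ Φ x := by
        rw [hΦe, hΦx]
        linarith only [hsum1, hterm2]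
      exact le_trans hΦeK hex
    · -- some coordinate is large
      push_neg at hR
      obtain ⟨i, hi⟩ := hR
      have h1 : (R - Y) ^ 2 ≤ (x i - y i) ^ 2 := by
        apply pow_le_pow_left₀ (by rw [hRdef]; linarith)
        have := hyY i
        linarith
      have h2 : (x i - y i) ^ 2 ≤ ∑ j, (x j - y j) ^ 2 :=
        Finset.single_le_sum (f := fun j => (x j - y j) ^ 2) (fun j _ => sq_nonneg _)
          (Finset.mem_univ i)
      have h3 : (R - Y) ^ 2 = S + 2 * μ := by
        rw [hRdef]
        have : Y + Real.sqrt (S + 2 * μ) - Y = Real.sqrt (S + 2 * μ) := by ring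
        rw [this, Real.sq_sqrt (by linarith)]
      have h4 : 0 ≤ μ * (∑ i, x i ^ 2) ^ ((3 : ℝ) / 2) / (∑ i, x i ^ 3) :=
        div_nonneg (mul_nonneg hμ.le hAnn) hB.le
      have hex : Φ e ≤ Φ x := by
        rw [hΦx]
        linarith only [h1, h2, h3, h4, hΦeub, sq_nonneg Y]
      exact le_trans hΦeK hex
  -- sort z
  set σ : Equiv.Perm (Fin (n + 1)) := Tuple.sort z with hσdef
  refine ⟨z ∘ σ, fun i => hz0 (σ i), ?_, Tuple.monotone_sort z, ?_⟩
  · intro h0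
    apply hzne
    funext i
    have := congrFun h0 (σ.symm i)
    simpa using this
  · intro x hx0 hxne
    have hmv : Monovary (z ∘ σ) y := (Tuple.monotone_sort z).monovary hymono
    have hrear : ∑ i, (z ∘ σ) i * y (σ i) ≤ ∑ i, (z ∘ σ) i * y i :=
      hmv.sum_mul_comp_perm_le_sum_mul
    have hcross : ∑ i, z i * y i ≤ ∑ i, (z ∘ σ) i * y i := by
      have h := Equiv.sum_comp σ (fun i => z i * y i)
      calc ∑ i, z i * y i = ∑ i, z (σ i) * y (σ i) := h.symm
        _ ≤ ∑ i, (z ∘ σ) i * y i := hrear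
    have hsq : ∑ i, ((z ∘ σ) i) ^ 2 = ∑ i, z i ^ 2 := Equiv.sum_comp σ (fun i => z i ^ 2)
    have hcb : ∑ i, ((z ∘ σ) i) ^ 3 = ∑ i, z i ^ 3 := Equiv.sum_comp σ (fun i => z i ^ 3)
    have hnum : ∑ i, ((z ∘ σ) i - y i) ^ 2 ≤ ∑ i, (z i - y i) ^ 2 := by
      rw [sum_sq_expand y (z ∘ σ), sum_sq_expand y z, hsq]
      linarith [hcross]
    have hΦσ : Φ (z ∘ σ) ≤ Φ z := by
      simp only [hΦdef]
      rw [hsq, hcb]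
      linarith [hnum]
    have hfinal : Φ (z ∘ σ) ≤ Φ x := le_trans hΦσ (hglobal x hx0 hxne)
    simpa only [hΦdef] using hfinal
end

section
/- Let n ≥ 1, μ > 0, y ∈ ℝⁿ, and let x ∈ ℝⁿ with all components strictly positive be a local minimizer of Φ(x) = (1/2)‖x − y‖₂² + μ(Σⱼ xⱼ²)^{3/2}/(Σⱼ xⱼ³). Set α = ‖x‖₂²/‖x‖₃³ = (Σⱼ xⱼ²)/(Σⱼ xⱼ³) and β = ‖x‖₂. Then every component satisfies the quadratic equation xᵢ² − p·xᵢ + qᵢ = 0, where p = (β + 3μα)/(3μα²) and qᵢ = β·yᵢ/(3μα²). -/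
/-- First-order optimality conditions for the
inverse-skewness proximal objective: if `x` has strictly positive components
and is a local minimizer of
`Φ(x) = (1/2)‖x − y‖₂² + μ(Σxⱼ²)^{3/2}/(Σxⱼ³)`, then with
`α = (Σxⱼ²)/(Σxⱼ³)` and `β = ‖x‖₂` every component satisfies the quadratic
`xᵢ² − p·xᵢ + qᵢ = 0` with `p = (β + 3μα)/(3μα²)`, `qᵢ = βyᵢ/(3μα²)`. -/
theorem inverse_skewness_stationarity
    (n : ℕ) (μ : ℝ) (hμ : 0 < μ) (y x : Fin (n + 1) → ℝ)
    (hxpos : ∀ i, 0 < x i)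
    (hmin : IsLocalMin (fun z : Fin (n + 1) → ℝ =>
      (1 / 2) * ∑ i, (z i - y i) ^ 2
        + μ * (∑ j, (z j) ^ 2) ^ ((3 : ℝ) / 2) / (∑ j, (z j) ^ 3)) x)
    (α β p : ℝ)
    (hα : α = (∑ j, (x j) ^ 2) / (∑ j, (x j) ^ 3))
    (hβ : β = Real.sqrt (∑ j, (x j) ^ 2))
    (hp : p = (β + 3 * μ * α) / (3 * μ * α ^ 2)) :
    ∀ i, (x i) ^ 2 - p * x i + β * y i / (3 * μ * α ^ 2) = 0 := by
  intro i
  set S := ∑ j, (x j) ^ 2 with hSdef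
  set T := ∑ j, (x j) ^ 3 with hTdef
  have hS : 0 < S := Finset.sum_pos (fun j _ => pow_pos (hxpos j) 2) Finset.univ_nonempty
  have hT : 0 < T := Finset.sum_pos (fun j _ => pow_pos (hxpos j) 3) Finset.univ_nonempty
  have hsum : ∀ (f : Fin (n + 1) → ℝ → ℝ) (s : ℝ),
      ∑ j, f j (Function.update x i s j)
        = f i s + ∑ j ∈ Finset.univ.erase i, f j (x j) := by
    intro f s
    rw [← Finset.add_sum_erase _ _ (Finset.mem_univ i), Function.update_self]
    congr 1
    exact Finset.sum_congr rfl fun j hj => by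
      rw [Function.update_of_ne (Finset.ne_of_mem_erase hj)]
  set C1 := ∑ j ∈ Finset.univ.erase i, (x j - y j) ^ 2 with hC1def
  set C2 := ∑ j ∈ Finset.univ.erase i, (x j) ^ 2 with hC2def
  set C3 := ∑ j ∈ Finset.univ.erase i, (x j) ^ 3 with hC3def
  have hC2 : (x i) ^ 2 + C2 = S := by
    rw [hSdef, ← Finset.add_sum_erase _ _ (Finset.mem_univ i)]
  have hC3 : (x i) ^ 3 + C3 = T := by
    rw [hTdef, ← Finset.add_sum_erase _ _ (Finset.mem_univ i)]
  set g : ℝ → ℝ := fun s =>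
    (1 / 2) * ((s - y i) ^ 2 + C1) + μ * (s ^ 2 + C2) ^ ((3 : ℝ) / 2) / (s ^ 3 + C3)
    with hgdef
  have hgmin : IsLocalMin g (x i) := by
    have hc : ContinuousAt (fun s : ℝ => Function.update x i s) (x i) := by
      apply Continuous.continuousAt
      apply continuous_pi
      intro j
      simp only [Function.update_apply]
      by_cases h : j = i
      · simpa [h] using continuous_id'
      · simpa [h] using continuous_const
    have hmin' : IsLocalMin (fun z : Fin (n + 1) → ℝ =>
        (1 / 2) * ∑ i, (z i - y i) ^ 2
          + μ * (∑ j, (z j) ^ 2) ^ ((3 : ℝ) / 2) / (∑ j, (z j) ^ 3))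
        (Function.update x i (x i)) := by
      rwa [Function.update_eq_self]
    have hcomp := hmin'.comp_continuous hc
    have heq : (fun z : Fin (n + 1) → ℝ =>
        (1 / 2) * ∑ i, (z i - y i) ^ 2
          + μ * (∑ j, (z j) ^ 2) ^ ((3 : ℝ) / 2) / (∑ j, (z j) ^ 3))
        ∘ (fun s : ℝ => Function.update x i s) = g := by
      funext s
      simp only [Function.comp_apply, hgdef]
      rw [hsum (fun j t => (t - y j) ^ 2) s, hsum (fun j t => t ^ 2) s,
        hsum (fun j t => t ^ 3) s]
    rwa [heq] at hcomp
  -- compute the derivative of g at x i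
  have hSne : S ≠ 0 := hS.ne'
  have hTne : T ≠ 0 := hT.ne'
  have h1 : HasDerivAt (fun s : ℝ => (1 / 2) * ((s - y i) ^ 2 + C1)) (x i - y i) (x i) := by
    have := ((((hasDerivAt_id (x i)).sub_const (y i)).pow 2).add_const C1).const_mul (1 / 2 : ℝ)
    refine this.congr_deriv ?_
    simp
  have hinner : HasDerivAt (fun s : ℝ => s ^ 2 + C2) (2 * x i) (x i) := by
    simpa using (hasDerivAt_pow 2 (x i)).add_const C2
  have hne2 : (x i) ^ 2 + C2 ≠ 0 := by rw [hC2]; exact hSne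
  have hrpow : HasDerivAt (fun s : ℝ => (s ^ 2 + C2) ^ ((3 : ℝ) / 2))
      (2 * x i * ((3 : ℝ) / 2) * S ^ ((3 : ℝ) / 2 - 1)) (x i) := by
    have := hinner.rpow_const (p := (3 : ℝ) / 2) (Or.inl hne2)
    simpa [hC2] using this
  have hden : HasDerivAt (fun s : ℝ => s ^ 3 + C3) (3 * (x i) ^ 2) (x i) := by
    simpa using (hasDerivAt_pow 3 (x i)).add_const C3
  have hne3 : (x i) ^ 3 + C3 ≠ 0 := by rw [hC3]; exact hTne
  have hquot := ((hrpow.const_mul μ).div hden hne3)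
  have hg : HasDerivAt g ((x i - y i) +
      (μ * (2 * x i * ((3 : ℝ) / 2) * S ^ ((3 : ℝ) / 2 - 1)) * ((x i) ^ 3 + C3)
        - μ * ((x i) ^ 2 + C2) ^ ((3 : ℝ) / 2) * (3 * (x i) ^ 2)) / ((x i) ^ 3 + C3) ^ 2)
      (x i) := h1.add hquot
  have hD0 := hgmin.hasDerivAt_eq_zero hg
  -- simplify powers
  have hβpos : 0 < β := by rw [hβ]; exact Real.sqrt_pos.2 hS
  have hβ2 : β ^ 2 = S := by rw [hβ]; exact Real.sq_sqrt hS.le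
  have hhalf : S ^ ((3 : ℝ) / 2 - 1) = β := by
    have h12 : (3 : ℝ) / 2 - 1 = 1 / 2 := by norm_num
    rw [h12, ← Real.sqrt_eq_rpow, ← hβ]
  have h32 : S ^ ((3 : ℝ) / 2) = β ^ 3 := by
    rw [Real.rpow_div_two_eq_sqrt _ hS.le,
      show (3 : ℝ) = ((3 : ℕ) : ℝ) by norm_num, Real.rpow_natCast, ← hβ]
  rw [hC2, hC3, hhalf, h32] at hD0
  have hαpos : 0 < α := by rw [hα]; exact div_pos hS hT
  have hαT : α * T = β ^ 2 := by
    rw [hα, hβ2]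
    field_simp
  have hTval : T = β ^ 2 / α := by
    field_simp
    linarith [hαT]
  rw [hTval] at hD0
  rw [hp]
  have hμne := hμ.ne'
  have hαne := hαpos.ne'
  have hβne := hβpos.ne'
  field_simp at hD0 ⊢
  have key : β * (x i - y i) + 3 * μ * x i * α - 3 * μ * α ^ 2 * (x i) ^ 2 = 0 := by
    apply mul_left_cancel₀
      (mul_ne_zero (mul_ne_zero two_ne_zero hαne) (pow_ne_zero 3 hβne))
    rw [mul_zero]
    linear_combination (2 * α * β ^ 3) * hD0
  linear_combination -key
end

section
/- Let μ > 0 and let α, β, δ, φ, ψ be strictly positive real numbers satisfying the system: (i) (β + 3μα)/(3μα²) = (2/δ)·√(β/(3μα²)); (ii) (2/δ)·√(β/(3μ)) = φ; (iii) 3μα²βδ² = 4ψ. Then φ > 1 and the following closed-form relations hold: δ⁴ = (16/(3μ))·√ψ·(φ − 1)/φ³, α = √(3φ)·ψ^{1/4}/(3√μ·√(φ − 1)), and β = √(3μφ(φ − 1))·ψ^{1/4}. -/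
private lemma sq_eq_of_nonneg {a b : ℝ} (ha : 0 ≤ a) (hb : 0 ≤ b)
    (h : a ^ 2 = b ^ 2) : a = b := by
  rw [← Real.sqrt_sq ha, ← Real.sqrt_sq hb, h]

/-- Closed-form solution of the lifted optimality system for
the inverse-skewness proximity operator: if the positive scalars
`α, β, δ, φ, ψ` satisfy `(β + 3μα)/(3μα²) = (2/δ)√(β/(3μα²))`,
`(2/δ)√(β/(3μ)) = φ` and `3μα²βδ² = 4ψ`, then `φ > 1`,
`δ⁴ = (16/(3μ))·√ψ·(φ − 1)/φ³`,
`α = √(3φ)·ψ^{1/4}/(3√μ·√(φ − 1))` and `β = √(3μφ(φ − 1))·ψ^{1/4}`. -/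
theorem lifted_system_closed_form
    (μ α β δ φ ψ : ℝ) (hμ : 0 < μ) (hα : 0 < α) (hβ : 0 < β)
    (hδ : 0 < δ) (hφ : 0 < φ) (hψ : 0 < ψ)
    (h1 : (β + 3 * μ * α) / (3 * μ * α ^ 2)
        = (2 / δ) * Real.sqrt (β / (3 * μ * α ^ 2)))
    (h2 : (2 / δ) * Real.sqrt (β / (3 * μ)) = φ)
    (h3 : 3 * μ * α ^ 2 * β * δ ^ 2 = 4 * ψ) :
    1 < φ ∧
    δ ^ 4 = (16 / (3 * μ)) * Real.sqrt ψ * (φ - 1) / φ ^ 3 ∧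
    α = Real.sqrt (3 * φ) * ψ ^ ((1 : ℝ) / 4)
          / (3 * Real.sqrt μ * Real.sqrt (φ - 1)) ∧
    β = Real.sqrt (3 * μ * φ * (φ - 1)) * ψ ^ ((1 : ℝ) / 4) := by
  have h3μ : (0:ℝ) < 3 * μ := by linarith
  set s := Real.sqrt (β / (3 * μ * α ^ 2)) with hs
  have hs0 : 0 < s := Real.sqrt_pos.mpr (by positivity)
  have hrel : Real.sqrt (β / (3 * μ)) = α * s := by
    rw [hs, ← Real.sqrt_sq hα.le, ← Real.sqrt_mul (by positivity)]
    congr 1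
    field_simp
    ring_nf
    exact Real.sq_sqrt (sq_nonneg α)
  have h2' : 2 * (α * s) = φ * δ := by
    rw [hrel] at h2
    field_simp at h2
    linarith
  have h1' : (β + 3 * μ * α) * δ = 2 * s * (3 * μ * α ^ 2) := by
    field_simp at h1
    linarith
  -- eliminate s : multiply h1' by α, use h2'
  have hE1 : β = 3 * μ * α * (φ - 1) := by
    have hmul : (β + 3 * μ * α) * δ * α = φ * δ * (3 * μ * α ^ 2) := by
      calc (β + 3 * μ * α) * δ * α = (2 * (α * s)) * (3 * μ * α ^ 2) := by
            linear_combination α * h1'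
        _ = φ * δ * (3 * μ * α ^ 2) := by rw [h2']
    have := mul_right_cancel₀ (by positivity : (δ * α) ≠ 0)
      (by linarith [hmul] : (β + 3 * μ * α) * (δ * α) = (3 * μ * α * φ) * (δ * α))
    linarith
  have hφ1 : 1 < φ := by nlinarith [mul_pos h3μ hα]
  have hδ2 : 3 * μ * φ ^ 2 * δ ^ 2 = 4 * β := by
    have hsq : ((2 / δ) * Real.sqrt (β / (3 * μ))) ^ 2 = φ ^ 2 := by rw [h2]
    rw [mul_pow, Real.sq_sqrt (by positivity)] at hsq
    field_simp at hsq
    nlinarith [hsq]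
  have hψs : Real.sqrt ψ ^ 2 = ψ := Real.sq_sqrt hψ.le
  have hψs0 : 0 < Real.sqrt ψ := Real.sqrt_pos.mpr hψ
  have hprod : α * β = φ * Real.sqrt ψ := by
    apply sq_eq_of_nonneg (by positivity) (by positivity)
    rw [mul_pow, mul_pow, hψs]
    linear_combination (φ ^ 2 / 4) * h3 - (α ^ 2 * β / 4) * hδ2
  have halpha2 : 3 * μ * (φ - 1) * α ^ 2 = φ * Real.sqrt ψ := by
    linear_combination hprod - α * hE1
  have hbeta2 : β ^ 2 = 3 * μ * φ * (φ - 1) * Real.sqrt ψ := by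
    linear_combination β * hE1 + 3 * μ * (φ - 1) * hprod
  have hδ4 : 3 * μ * φ ^ 3 * δ ^ 4 = 16 * (φ - 1) * Real.sqrt ψ := by
    have h9 : 9 * μ ^ 2 * φ ^ 4 * δ ^ 4 = 16 * β ^ 2 := by
      linear_combination (3 * μ * φ ^ 2 * δ ^ 2 + 4 * β) * hδ2
    have hcan : 3 * μ * φ * (3 * μ * φ ^ 3 * δ ^ 4)
        = 3 * μ * φ * (16 * (φ - 1) * Real.sqrt ψ) := by
      linear_combination h9 + 16 * hbeta2
    exact mul_left_cancel₀ (by positivity) hcan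
  have hq0 : 0 < ψ ^ ((1:ℝ)/4) := Real.rpow_pos_of_pos hψ _
  have hq2 : (ψ ^ ((1:ℝ)/4)) ^ 2 = Real.sqrt ψ := by
    rw [← Real.rpow_natCast (ψ ^ ((1:ℝ)/4)) 2, ← Real.rpow_mul hψ.le,
      Real.sqrt_eq_rpow]
    norm_num
  refine ⟨hφ1, ?_, ?_, ?_⟩
  · field_simp
    linear_combination hδ4
  · have hφm : (0:ℝ) < φ - 1 := by linarith
    apply sq_eq_of_nonneg hα.le (by positivity)
    have hden : (3 * Real.sqrt μ * Real.sqrt (φ - 1)) ^ 2 = 9 * μ * (φ - 1) := by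
      rw [mul_pow, mul_pow, Real.sq_sqrt hμ.le, Real.sq_sqrt hφm.le]; ring
    rw [div_pow, hden, mul_pow, hq2, Real.sq_sqrt (by positivity : (0:ℝ) ≤ 3 * φ)]
    rw [eq_div_iff (ne_of_gt (by nlinarith : (0:ℝ) < 9 * μ * (φ - 1)))]
    linear_combination 3 * halpha2
  · have hφm : (0:ℝ) < φ - 1 := by linarith
    apply sq_eq_of_nonneg hβ.le
      (mul_nonneg (Real.sqrt_nonneg _) hq0.le)
    rw [mul_pow, hq2, Real.sq_sqrt (by nlinarith : (0:ℝ) ≤ 3 * μ * φ * (φ - 1))]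
    linear_combination hbeta2
end
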